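/- arXiv:1312.5266 — 3 statements merged into one kernel-verified Lean document; each statement's English description precedes it below -/
import Mathlib

section
/- Let u : ℝ³ → ℝ be twice continuously differentiable in (x,y,t) satisfying u_{xx} + u_x u_{yt} − u_y u_{xt} = 0 at every point, with u_x nowhere vanishing. Then the following four conservation laws hold at every point: (1) ∂_x(u_y/(2u_x²)) + ∂_y(1/(2u_x)) − ∂_t(u_y²/(2u_x²)) = 0; (2) ∂_x(u_x − u_y u_t) + ∂_y(u_x u_t) = 0; (3) ∂_x(2 u_x u_t − u_y u_t²) + ∂_y(u_t² u_x) − ∂_t(u_x²) = 0; (4) −∂_x(1/u_x) + ∂_t(u_y/u_x) = 0. -/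
/-- Partial derivative with respect to the first variable `x`. -/
noncomputable def pdx (f : ℝ × ℝ × ℝ → ℝ) (p : ℝ × ℝ × ℝ) : ℝ :=
  deriv (fun s => f (s, p.2.1, p.2.2)) p.1

/-- Partial derivative with respect to the second variable `y`. -/
noncomputable def pdy (f : ℝ × ℝ × ℝ → ℝ) (p : ℝ × ℝ × ℝ) : ℝ :=
  deriv (fun s => f (p.1, s, p.2.2)) p.2.1

/-- Partial derivative with respect to the third variable `t`. -/
noncomputable def pdt (f : ℝ × ℝ × ℝ → ℝ) (p : ℝ × ℝ × ℝ) : ℝ :=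
  deriv (fun s => f (p.1, p.2.1, s)) p.2.2

/-!
Write `a = u_x`, `b = u_y`, `c = u_t`. By the product and quotient rules each flux divergence is
a linear combination of the second derivatives of `u`; once the mixed partials are identified
(`b_x = a_y`, `c_x = a_t`, `c_y = b_t`) it collapses to a multiple of the left-hand side
`a_x + a b_t - b a_t` of the equation, with characteristic multipliers `-b / a³`, `1`, `2c` and
`1 / a²` for the four laws.
-/

section Slices

variable {f : ℝ × ℝ × ℝ → ℝ} {p : ℝ × ℝ × ℝ}

theorem hasDerivAt_pdx_fderiv (hf : DifferentiableAt ℝ f p) :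
    HasDerivAt (fun s => f (s, p.2.1, p.2.2)) (fderiv ℝ f p (1, 0, 0)) p.1 :=
  hf.hasFDerivAt.comp_hasDerivAt p.1 <|
    (hasDerivAt_id p.1).prodMk ((hasDerivAt_const p.1 p.2.1).prodMk (hasDerivAt_const p.1 p.2.2))

theorem hasDerivAt_pdy_fderiv (hf : DifferentiableAt ℝ f p) :
    HasDerivAt (fun s => f (p.1, s, p.2.2)) (fderiv ℝ f p (0, 1, 0)) p.2.1 :=
  hf.hasFDerivAt.comp_hasDerivAt p.2.1 <|
    (hasDerivAt_const p.2.1 p.1).prodMk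
      ((hasDerivAt_id p.2.1).prodMk (hasDerivAt_const p.2.1 p.2.2))

theorem hasDerivAt_pdt_fderiv (hf : DifferentiableAt ℝ f p) :
    HasDerivAt (fun s => f (p.1, p.2.1, s)) (fderiv ℝ f p (0, 0, 1)) p.2.2 :=
  hf.hasFDerivAt.comp_hasDerivAt p.2.2 <|
    (hasDerivAt_const p.2.2 p.1).prodMk
      ((hasDerivAt_const p.2.2 p.2.1).prodMk (hasDerivAt_id p.2.2))

theorem pdx_eq_fderiv (hf : DifferentiableAt ℝ f p) : pdx f p = fderiv ℝ f p (1, 0, 0) :=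
  (hasDerivAt_pdx_fderiv hf).deriv

theorem pdy_eq_fderiv (hf : DifferentiableAt ℝ f p) : pdy f p = fderiv ℝ f p (0, 1, 0) :=
  (hasDerivAt_pdy_fderiv hf).deriv

theorem pdt_eq_fderiv (hf : DifferentiableAt ℝ f p) : pdt f p = fderiv ℝ f p (0, 0, 1) :=
  (hasDerivAt_pdt_fderiv hf).deriv

theorem hasDerivAt_pdx (hf : DifferentiableAt ℝ f p) :
    HasDerivAt (fun s => f (s, p.2.1, p.2.2)) (pdx f p) p.1 :=
  pdx_eq_fderiv hf ▸ hasDerivAt_pdx_fderiv hf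

theorem hasDerivAt_pdy (hf : DifferentiableAt ℝ f p) :
    HasDerivAt (fun s => f (p.1, s, p.2.2)) (pdy f p) p.2.1 :=
  pdy_eq_fderiv hf ▸ hasDerivAt_pdy_fderiv hf

theorem hasDerivAt_pdt (hf : DifferentiableAt ℝ f p) :
    HasDerivAt (fun s => f (p.1, p.2.1, s)) (pdt f p) p.2.2 :=
  pdt_eq_fderiv hf ▸ hasDerivAt_pdt_fderiv hf

end Slices

theorem fderiv_fderiv_apply_comm {E F : Type*} [NormedAddCommGroup E] [NormedSpace ℝ E]
    [NormedAddCommGroup F] [NormedSpace ℝ F] {u : E → F} (hu : ContDiff ℝ 2 u) (p v w : E) :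
    fderiv ℝ (fun q => fderiv ℝ u q v) p w = fderiv ℝ (fun q => fderiv ℝ u q w) p v := by
  have hd : Differentiable ℝ (fderiv ℝ u) :=
    (hu.fderiv_right one_add_one_eq_two.le).differentiable one_ne_zero
  rw [fderiv_clm_apply (hd p) (differentiableAt_const v),
    fderiv_clm_apply (hd p) (differentiableAt_const w)]
  simpa using (hu.contDiffAt.isSymmSndFDerivAt (by simp)) w v

section SecondDerivatives

variable {u : ℝ × ℝ × ℝ → ℝ}

theorem ContDiff.pdx_eq (hu : ContDiff ℝ 2 u) : pdx u = fun q => fderiv ℝ u q (1, 0, 0) :=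
  funext fun _ => pdx_eq_fderiv (hu.differentiable two_ne_zero _)

theorem ContDiff.pdy_eq (hu : ContDiff ℝ 2 u) : pdy u = fun q => fderiv ℝ u q (0, 1, 0) :=
  funext fun _ => pdy_eq_fderiv (hu.differentiable two_ne_zero _)

theorem ContDiff.pdt_eq (hu : ContDiff ℝ 2 u) : pdt u = fun q => fderiv ℝ u q (0, 0, 1) :=
  funext fun _ => pdt_eq_fderiv (hu.differentiable two_ne_zero _)

theorem ContDiff.differentiable_fderiv_apply (hu : ContDiff ℝ 2 u) (v : ℝ × ℝ × ℝ) :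
    Differentiable ℝ fun q => fderiv ℝ u q v :=
  ((hu.fderiv_right one_add_one_eq_two.le).clm_apply contDiff_const).differentiable one_ne_zero

theorem ContDiff.differentiable_pdx (hu : ContDiff ℝ 2 u) : Differentiable ℝ (pdx u) :=
  hu.pdx_eq ▸ hu.differentiable_fderiv_apply _

theorem ContDiff.differentiable_pdy (hu : ContDiff ℝ 2 u) : Differentiable ℝ (pdy u) :=
  hu.pdy_eq ▸ hu.differentiable_fderiv_apply _

theorem ContDiff.differentiable_pdt (hu : ContDiff ℝ 2 u) : Differentiable ℝ (pdt u) :=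
  hu.pdt_eq ▸ hu.differentiable_fderiv_apply _

theorem ContDiff.pdy_pdx (hu : ContDiff ℝ 2 u) (p : ℝ × ℝ × ℝ) :
    pdy (pdx u) p = pdx (pdy u) p := by
  rw [pdy_eq_fderiv (hu.differentiable_pdx p), pdx_eq_fderiv (hu.differentiable_pdy p),
    hu.pdx_eq, hu.pdy_eq, fderiv_fderiv_apply_comm hu]

theorem ContDiff.pdt_pdx (hu : ContDiff ℝ 2 u) (p : ℝ × ℝ × ℝ) :
    pdt (pdx u) p = pdx (pdt u) p := by
  rw [pdt_eq_fderiv (hu.differentiable_pdx p), pdx_eq_fderiv (hu.differentiable_pdt p),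
    hu.pdx_eq, hu.pdt_eq, fderiv_fderiv_apply_comm hu]

theorem ContDiff.pdt_pdy (hu : ContDiff ℝ 2 u) (p : ℝ × ℝ × ℝ) :
    pdt (pdy u) p = pdy (pdt u) p := by
  rw [pdt_eq_fderiv (hu.differentiable_pdy p), pdy_eq_fderiv (hu.differentiable_pdt p),
    hu.pdy_eq, hu.pdt_eq, fderiv_fderiv_apply_comm hu]

end SecondDerivatives

noncomputable def equationLHS (u : ℝ × ℝ × ℝ → ℝ) (p : ℝ × ℝ × ℝ) : ℝ :=
  pdx (pdx u) p + pdx u p * pdt (pdy u) p - pdy u p * pdt (pdx u) p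

section ConservationLaws

variable {u : ℝ × ℝ × ℝ → ℝ}

theorem divergence_flux₁_eq (hu : ContDiff ℝ 2 u) (p : ℝ × ℝ × ℝ) (ha : pdx u p ≠ 0) :
    pdx (fun q => pdy u q / (2 * (pdx u q) ^ 2)) p
      + pdy (fun q => 1 / (2 * pdx u q)) p
      - pdt (fun q => (pdy u q) ^ 2 / (2 * (pdx u q) ^ 2)) p
      = -pdy u p / pdx u p ^ 3 * equationLHS u p := by
  have hax := hasDerivAt_pdx (hu.differentiable_pdx p)
  have hbx := hasDerivAt_pdx (hu.differentiable_pdy p)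
  have hay := hasDerivAt_pdy (hu.differentiable_pdx p)
  have hat := hasDerivAt_pdt (hu.differentiable_pdx p)
  have hbt := hasDerivAt_pdt (hu.differentiable_pdy p)
  have h2a : 2 * pdx u p ^ 2 ≠ 0 := by positivity
  have hX : pdx (fun q => pdy u q / (2 * (pdx u q) ^ 2)) p = _ :=
    (hbx.fun_div ((hax.fun_pow 2).const_mul 2) h2a).deriv
  have hY : pdy (fun q => 1 / (2 * pdx u q)) p = _ :=
    ((hasDerivAt_const _ 1).fun_div (hay.const_mul 2) (by positivity)).deriv
  have hT : pdt (fun q => (pdy u q) ^ 2 / (2 * (pdx u q) ^ 2)) p = _ :=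
    ((hbt.fun_pow 2).fun_div ((hat.fun_pow 2).const_mul 2) h2a).deriv
  rw [hX, hY, hT, equationLHS, hu.pdy_pdx]
  field_simp
  ring

theorem divergence_flux₂_eq (hu : ContDiff ℝ 2 u) (p : ℝ × ℝ × ℝ) :
    pdx (fun q => pdx u q - pdy u q * pdt u q) p + pdy (fun q => pdx u q * pdt u q) p
      = equationLHS u p := by
  have hax := hasDerivAt_pdx (hu.differentiable_pdx p)
  have hbx := hasDerivAt_pdx (hu.differentiable_pdy p)
  have hcx := hasDerivAt_pdx (hu.differentiable_pdt p)
  have hay := hasDerivAt_pdy (hu.differentiable_pdx p)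
  have hcy := hasDerivAt_pdy (hu.differentiable_pdt p)
  have hX : pdx (fun q => pdx u q - pdy u q * pdt u q) p = _ :=
    (hax.fun_sub (hbx.fun_mul hcx)).deriv
  have hY : pdy (fun q => pdx u q * pdt u q) p = _ := (hay.fun_mul hcy).deriv
  rw [hX, hY, equationLHS, hu.pdy_pdx, hu.pdt_pdx, hu.pdt_pdy]
  ring

theorem divergence_flux₃_eq (hu : ContDiff ℝ 2 u) (p : ℝ × ℝ × ℝ) :
    pdx (fun q => 2 * pdx u q * pdt u q - pdy u q * (pdt u q) ^ 2) p
      + pdy (fun q => (pdt u q) ^ 2 * pdx u q) p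
      - pdt (fun q => (pdx u q) ^ 2) p
      = 2 * pdt u p * equationLHS u p := by
  have hax := hasDerivAt_pdx (hu.differentiable_pdx p)
  have hbx := hasDerivAt_pdx (hu.differentiable_pdy p)
  have hcx := hasDerivAt_pdx (hu.differentiable_pdt p)
  have hay := hasDerivAt_pdy (hu.differentiable_pdx p)
  have hcy := hasDerivAt_pdy (hu.differentiable_pdt p)
  have hat := hasDerivAt_pdt (hu.differentiable_pdx p)
  have hX : pdx (fun q => 2 * pdx u q * pdt u q - pdy u q * (pdt u q) ^ 2) p = _ :=
    (((hax.const_mul 2).fun_mul hcx).fun_sub (hbx.fun_mul (hcx.fun_pow 2))).deriv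
  have hY : pdy (fun q => (pdt u q) ^ 2 * pdx u q) p = _ := ((hcy.fun_pow 2).fun_mul hay).deriv
  have hT : pdt (fun q => (pdx u q) ^ 2) p = _ := (hat.fun_pow 2).deriv
  rw [hX, hY, hT, equationLHS, hu.pdy_pdx, hu.pdt_pdx, hu.pdt_pdy]
  ring

theorem divergence_flux₄_eq (hu : ContDiff ℝ 2 u) (p : ℝ × ℝ × ℝ) (ha : pdx u p ≠ 0) :
    -pdx (fun q => 1 / pdx u q) p + pdt (fun q => pdy u q / pdx u q) p
      = equationLHS u p / pdx u p ^ 2 := by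
  have hax := hasDerivAt_pdx (hu.differentiable_pdx p)
  have hat := hasDerivAt_pdt (hu.differentiable_pdx p)
  have hbt := hasDerivAt_pdt (hu.differentiable_pdy p)
  have hX : pdx (fun q => 1 / pdx u q) p = _ := ((hasDerivAt_const _ 1).fun_div hax ha).deriv
  have hT : pdt (fun q => pdy u q / pdx u q) p = _ := (hbt.fun_div hat ha).deriv
  rw [hX, hT, equationLHS]
  field_simp
  ring

end ConservationLaws

/-- The four first-order conservation laws of the equation
`u_{xx} + u_x u_{yt} - u_y u_{xt} = 0`. -/
theorem equation2_conservation_laws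
    (u : ℝ × ℝ × ℝ → ℝ) (hu : ContDiff ℝ 2 u)
    (heq : ∀ p : ℝ × ℝ × ℝ,
      pdx (pdx u) p + pdx u p * pdt (pdy u) p - pdy u p * pdt (pdx u) p = 0)
    (hx : ∀ p : ℝ × ℝ × ℝ, pdx u p ≠ 0) :
    (∀ p : ℝ × ℝ × ℝ,
      pdx (fun q => pdy u q / (2 * (pdx u q) ^ 2)) p
        + pdy (fun q => 1 / (2 * pdx u q)) p
        - pdt (fun q => (pdy u q) ^ 2 / (2 * (pdx u q) ^ 2)) p = 0) ∧
    (∀ p : ℝ × ℝ × ℝ,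
      pdx (fun q => pdx u q - pdy u q * pdt u q) p
        + pdy (fun q => pdx u q * pdt u q) p = 0) ∧
    (∀ p : ℝ × ℝ × ℝ,
      pdx (fun q => 2 * pdx u q * pdt u q - pdy u q * (pdt u q) ^ 2) p
        + pdy (fun q => (pdt u q) ^ 2 * pdx u q) p
        - pdt (fun q => (pdx u q) ^ 2) p = 0) ∧
    (∀ p : ℝ × ℝ × ℝ,
      -pdx (fun q => 1 / pdx u q) p + pdt (fun q => pdy u q / pdx u q) p = 0) := by
  have hE : ∀ p, equationLHS u p = 0 := heq
  refine ⟨fun p => ?_, fun p => ?_, fun p => ?_, fun p => ?_⟩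
  · rw [divergence_flux₁_eq hu p (hx p), hE, mul_zero]
  · rw [divergence_flux₂_eq hu p, hE]
  · rw [divergence_flux₃_eq hu p, hE, mul_zero]
  · rw [divergence_flux₄_eq hu p (hx p), hE, zero_div]
end

section
/- For all real p₁, p₂, p₃ and all real α, β, γ, δ, set J₁ = −αδ − βγ/2, J₂ = 2αγ + δ²/2, J₃ = δγ/2, J₄ = γ²/4, J₅ = αγ, J₆ = −αδ, J₇ = α² + βδ/2, J₈ = α², J₉ = αβ, J₁₀ = −β²/4, and define F₁ = J₂ p₃²/2 + J₃ (p₂ p₃ − p₃³) + J₄ (p₂² − 2 p₂ p₃² + p₃⁴) − J₅ p₂ + J₆ p₃ + J₈, F₂ = J₁ (p₂ − p₃²) + J₂ (p₂ p₃ − p₃³/2) + J₃ (−p₁ p₃ + p₂² − 3 p₂ p₃² + p₃⁴) + J₄ (−2 p₁ p₂ + 2 p₁ p₃² − 3 p₂² p₃ + 4 p₂ p₃³ − p₃⁵) + J₅ p₁ − J₇ p₃ + J₉, F₃ = J₁ (p₁ + p₂ p₃) + J₂ (−p₂ p₃² − p₂²/2 + (3/2) p₃² p₂) + J₃ (p₁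 p₂ + 2 p₃ p₂² − p₂ p₃³) + J₄ (−2 p₁ p₂ p₃ − p₁² − 3 p₂² p₃² + p₂ p₃⁴ + p₂³) − J₆ p₁ + J₇ p₂ + J₁₀. Let g be the symmetric matrix with g₁₁ = 0, g₁₂ = 0, g₁₃ = 1/2, g₂₂ = 1, g₂₃ = −p₃/2, g₃₃ = p₂. Then F · adj(g) · Fᵀ = 0, where adj denotes the adjugate matrix. -/
/-!
The adjugate of the symbol turns the characteristic condition into
`F₁ (p₂ F₁ - F₃) = (F₂ + p₃ F₁)² / 4`, a quadric cone parametrised by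
`F = (A², 2AB - p₃A², p₂A² - B²)`. The combination of fluxes prescribed by `J₁, …, J₁₀` is exactly
this parametrisation with `A = α - γ (p₂ - p₃²) / 2 - δ p₃ / 2` and `B = (β + γ (p₁ + p₂ p₃) - δ p₂) / 2`.
-/

open Matrix

variable {K : Type*} [Field K] [CharZero K]

/-- The principal symbol of `u_{yy} + u_{xt} + u_y u_{tt} - u_t u_{yt} = 0`; it depends only on
`p₂ = u_y` and `p₃ = u_t`. -/
def principalSymbol (p₂ p₃ : K) : Matrix (Fin 3) (Fin 3) K :=
  !![0, 0, 1 / 2; 0, 1, -p₃ / 2; 1 / 2, -p₃ / 2, p₂]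

theorem adjugate_principalSymbol (p₂ p₃ : K) :
    (principalSymbol p₂ p₃).adjugate =
      !![p₂ - p₃ ^ 2 / 4, -p₃ / 4, -1 / 2; -p₃ / 4, -1 / 4, 0; -1 / 2, 0, 0] := by
  rw [principalSymbol, adjugate_fin_three_of]
  congr 1
  ring_nf

theorem dotProduct_adjugate_principalSymbol_mulVec (p₂ p₃ : K) (F : Fin 3 → K) :
    F ⬝ᵥ ((principalSymbol p₂ p₃).adjugate *ᵥ F) =
      F 0 * (p₂ * F 0 - F 2) - (F 1 + p₃ * F 0) ^ 2 / 4 := by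
  rw [adjugate_principalSymbol]
  simp only [dotProduct, mulVec, of_apply, cons_val', cons_val_fin_one, Fin.sum_univ_three,
    cons_val_zero, cons_val_one, cons_val, zero_mul, add_zero]
  ring

theorem dotProduct_adjugate_principalSymbol_mulVec_eq_zero {p₂ p₃ F₁ F₂ F₃ : K} (A B : K)
    (hF₁ : F₁ = A ^ 2) (hF₂ : F₂ = 2 * A * B - p₃ * A ^ 2) (hF₃ : F₃ = p₂ * A ^ 2 - B ^ 2) :
    ![F₁, F₂, F₃] ⬝ᵥ ((principalSymbol p₂ p₃).adjugate *ᵥ ![F₁, F₂, F₃]) = 0 := by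
  rw [dotProduct_adjugate_principalSymbol_mulVec]
  simp only [cons_val_zero, cons_val_one, cons_val_two, head_cons, tail_cons]
  rw [hF₁, hF₂, hF₃]
  ring

/-- The characteristic integrals of the equation `u_{yy} + u_{xt} + u_y u_{tt} - u_t u_{yt} = 0`
parametrised by `(α, β, γ, δ)` satisfy the characteristic condition
`F · adj(g) · Fᵀ = 0` for the principal symbol `g`. -/
theorem equation4_characteristic_integrals
    (p₁ p₂ p₃ : ℝ) (α β γ δ : ℝ)
    (J₁ J₂ J₃ J₄ J₅ J₆ J₇ J₈ J₉ J₁₀ F₁ F₂ F₃ : ℝ)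
    (hJ₁ : J₁ = -(α * δ) - β * γ / 2)
    (hJ₂ : J₂ = 2 * α * γ + δ ^ 2 / 2)
    (hJ₃ : J₃ = δ * γ / 2)
    (hJ₄ : J₄ = γ ^ 2 / 4)
    (hJ₅ : J₅ = α * γ)
    (hJ₆ : J₆ = -(α * δ))
    (hJ₇ : J₇ = α ^ 2 + β * δ / 2)
    (hJ₈ : J₈ = α ^ 2)
    (hJ₉ : J₉ = α * β)
    (hJ₁₀ : J₁₀ = -(β ^ 2) / 4)
    (hF₁ : F₁ = J₂ * (p₃ ^ 2 / 2) + J₃ * (p₂ * p₃ - p₃ ^ 3)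
      + J₄ * (p₂ ^ 2 - 2 * p₂ * p₃ ^ 2 + p₃ ^ 4) - J₅ * p₂ + J₆ * p₃ + J₈)
    (hF₂ : F₂ = J₁ * (p₂ - p₃ ^ 2) + J₂ * (p₂ * p₃ - p₃ ^ 3 / 2)
      + J₃ * (-(p₁ * p₃) + p₂ ^ 2 - 3 * p₂ * p₃ ^ 2 + p₃ ^ 4)
      + J₄ * (-(2 * p₁ * p₂) + 2 * p₁ * p₃ ^ 2 - 3 * p₂ ^ 2 * p₃
          + 4 * p₂ * p₃ ^ 3 - p₃ ^ 5)
      + J₅ * p₁ - J₇ * p₃ + J₉)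
    (hF₃ : F₃ = J₁ * (p₁ + p₂ * p₃)
      + J₂ * (-(p₂ * p₃ ^ 2) - p₂ ^ 2 / 2 + 3 / 2 * p₃ ^ 2 * p₂)
      + J₃ * (p₁ * p₂ + 2 * p₃ * p₂ ^ 2 - p₂ * p₃ ^ 3)
      + J₄ * (-(2 * p₁ * p₂ * p₃) - p₁ ^ 2 - 3 * p₂ ^ 2 * p₃ ^ 2
          + p₂ * p₃ ^ 4 + p₂ ^ 3)
      - J₆ * p₁ + J₇ * p₂ + J₁₀)
    (g : Matrix (Fin 3) (Fin 3) ℝ)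
    (hg : g = !![0, 0, 1 / 2; 0, 1, -p₃ / 2; 1 / 2, -p₃ / 2, p₂]) :
    ![F₁, F₂, F₃] ⬝ᵥ (g.adjugate *ᵥ ![F₁, F₂, F₃]) = 0 := by
  subst hJ₁ hJ₂ hJ₃ hJ₄ hJ₅ hJ₆ hJ₇ hJ₈ hJ₉ hJ₁₀
  rw [hg]
  apply dotProduct_adjugate_principalSymbol_mulVec_eq_zero
    (α - γ * (p₂ - p₃ ^ 2) / 2 - δ * p₃ / 2) ((β + γ * (p₁ + p₂ * p₃) - δ * p₂) / 2)
  · rw [hF₁]; ring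
  · rw [hF₂]; ring
  · rw [hF₃]; ring
end

section
/- For all real p₁, p₂, p₃ with p₁ ≠ 0 and all real α, β, γ, δ, set J₁ = α², J₂ = −βγ/2 − δ²/4, J₃ = −β²/4, J₄ = −βδ/2, J₅ = −γδ/2, J₆ = −βγ/2, J₇ = βα, J₈ = γ²/4, J₉ = γα, J₁₀ = δα, and define F₁ = −J₂ p₂² + J₃ (−p₃² + 2 p₃ p₂² − p₂⁴) + J₄ (p₃ p₂ − p₂³) − J₅ p₂ + J₆ p₃ + J₈, F₂ = J₁ p₂/p₁ + J₂ p₁ p₂ + J₃ (−2 p₁ p₂ p₃ + p₁ p₂³) + J₄ (−p₁ p₃ + p₁ p₂²) + J₅ p₁ − J₇ p₃ + J₉, F₃ = −J₁/p₁ + J₂ p₁ + J₃ p₁ p₂² + J₄ p₁ p₂ − J₆ p₁ + J₇ p₂ + J₁₀. Let g be the symmetric matrix with g₁₁ = g₃₃ = 0, g₁₂ = −p₂/2, g₁₃ = 1/2, g₂₂ = p₁, g₂₃ = 0. Then F · adj(g) · Fᵀ = 0, where adj denotes the adjugate matrix. -/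
/-!
The adjugate of the symbol turns the characteristic condition into
`4 p₁ F₁ F₃ + (F₂ + p₂ F₃)² = 0`. For the given family the three quantities involved factor:
with `r = β (p₃ - p₂²) - δ p₂ - γ` and `m = α - p₁ (β p₂ + δ) / 2` one has `4 F₁ = r²`,
`p₁ F₃ = -m²` and `F₂ + p₂ F₃ = -r m`, so the two terms cancel.
-/

open Matrix

theorem adjugate_symbol {K : Type*} [Field K] [CharZero K] (p₁ p₂ : K) :
    (!![0, -p₂ / 2, 1 / 2; -p₂ / 2, p₁, 0; 1 / 2, 0, 0] : Matrix (Fin 3) (Fin 3) K).adjugate =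
      !![0, 0, -p₁ / 2; 0, -1 / 4, -p₂ / 4; -p₁ / 2, -p₂ / 4, -p₂ ^ 2 / 4] := by
  rw [adjugate_fin_three]
  ext i j
  fin_cases i <;> fin_cases j <;>
    simp only [Fin.isValue, Fin.zero_eta, Fin.mk_one, Fin.reduceFinMk, of_apply, cons_val',
      cons_val_zero, cons_val_one, cons_val, cons_val_fin_one] <;>
    ring

theorem dotProduct_adjugate_symbol_mulVec {K : Type*} [Field K] [CharZero K]
    (p₁ p₂ F₁ F₂ F₃ : K) :
    ![F₁, F₂, F₃] ⬝ᵥ ((!![0, -p₂ / 2, 1 / 2; -p₂ / 2, p₁, 0; 1 / 2, 0, 0] :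
      Matrix (Fin 3) (Fin 3) K).adjugate *ᵥ ![F₁, F₂, F₃]) =
      -(p₁ * F₁ * F₃) - (F₂ + p₂ * F₃) ^ 2 / 4 := by
  rw [adjugate_symbol]
  simp only [dotProduct, mulVec, Fin.sum_univ_three, Fin.isValue, of_apply, cons_val',
    cons_val_zero, cons_val_one, cons_val, cons_val_fin_one]
  ring

/-- The characteristic integrals of the equation `u_{xt} + u_x u_{yy} - u_y u_{xy} = 0`
parametrised by `(α, β, γ, δ)` satisfy the characteristic condition
`F · adj(g) · Fᵀ = 0` for the principal symbol `g`. -/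
theorem equation5_characteristic_integrals
    (p₁ p₂ p₃ : ℝ) (hp₁ : p₁ ≠ 0) (α β γ δ : ℝ)
    (J₁ J₂ J₃ J₄ J₅ J₆ J₇ J₈ J₉ J₁₀ F₁ F₂ F₃ : ℝ)
    (hJ₁ : J₁ = α ^ 2)
    (hJ₂ : J₂ = -(β * γ) / 2 - δ ^ 2 / 4)
    (hJ₃ : J₃ = -(β ^ 2) / 4)
    (hJ₄ : J₄ = -(β * δ) / 2)
    (hJ₅ : J₅ = -(γ * δ) / 2)
    (hJ₆ : J₆ = -(β * γ) / 2)
    (hJ₇ : J₇ = β * α)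
    (hJ₈ : J₈ = γ ^ 2 / 4)
    (hJ₉ : J₉ = γ * α)
    (hJ₁₀ : J₁₀ = δ * α)
    (hF₁ : F₁ = -(J₂ * p₂ ^ 2) + J₃ * (-(p₃ ^ 2) + 2 * p₃ * p₂ ^ 2 - p₂ ^ 4)
      + J₄ * (p₃ * p₂ - p₂ ^ 3) - J₅ * p₂ + J₆ * p₃ + J₈)
    (hF₂ : F₂ = J₁ * p₂ / p₁ + J₂ * (p₁ * p₂)
      + J₃ * (-(2 * p₁ * p₂ * p₃) + p₁ * p₂ ^ 3)
      + J₄ * (-(p₁ * p₃) + p₁ * p₂ ^ 2) + J₅ * p₁ - J₇ * p₃ + J₉)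
    (hF₃ : F₃ = -(J₁ / p₁) + J₂ * p₁ + J₃ * (p₁ * p₂ ^ 2) + J₄ * (p₁ * p₂)
      - J₆ * p₁ + J₇ * p₂ + J₁₀)
    (g : Matrix (Fin 3) (Fin 3) ℝ)
    (hg : g = !![0, -p₂ / 2, 1 / 2; -p₂ / 2, p₁, 0; 1 / 2, 0, 0]) :
    ![F₁, F₂, F₃] ⬝ᵥ (g.adjugate *ᵥ ![F₁, F₂, F₃]) = 0 := by
  subst hJ₁ hJ₂ hJ₃ hJ₄ hJ₅ hJ₆ hJ₇ hJ₈ hJ₉ hJ₁₀ hg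
  set r := β * (p₃ - p₂ ^ 2) - δ * p₂ - γ
  set m := α - p₁ * (β * p₂ + δ) / 2
  have hF₁r : 4 * F₁ = r ^ 2 := by rw [hF₁]; ring
  have hF₃m : p₁ * F₃ = -m ^ 2 := by rw [hF₃]; field_simp; ring
  have hF₂rm : F₂ + p₂ * F₃ = -(r * m) := by rw [hF₂, hF₃]; field_simp; ring
  rw [dotProduct_adjugate_symbol_mulVec]
  linear_combination (-F₁) * hF₃m + m ^ 2 / 4 * hF₁r - (F₂ + p₂ * F₃ - r * m) / 4 * hF₂rm
end
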